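/- Let Q̂ > 0, λ > 0 and h ∈ ℂ. The function x ↦ (Q̂/2)|x|² − Re(h̄ · x) + λ|x| on ℂ attains its global minimum at a unique point x̂, given by: x̂ = 0 if |h| ≤ λ, and x̂ = (h/|h|) · (|h| − λ)/Q̂ if |h| > λ (the complex soft-thresholding of h). -/

import Mathlib

/-!
The objective is `Q̂`-strongly convex, being `(Q̂/2)|x|²` plus the convex function
`-Re(h̄ x) + λ|x|`, so it has at most one minimiser. By Cauchy–Schwarz it is bounded below by
`(Q̂/2)t² - (|h| - λ)t` with `t = |x|`, with equality on nonnegative multiples of `h`; the soft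
threshold is the multiple of `h` whose modulus `max(|h| - λ, 0)/Q̂` minimises this quadratic on
`t ≥ 0`. The argument works in any real inner product space; on `ℂ`, `⟪h, x⟫ = Re(h̄ x)`.
-/

open Set
open scoped RealInnerProductSpace

/-- The objective `x ↦ (Q̂/2)|x|² − Re(h̄·x) + λ|x|` on `ℂ`. -/
noncomputable def softThreshObj (Qh lam : ℝ) (h : ℂ) (x : ℂ) : ℝ :=
  Qh / 2 * ‖x‖ ^ 2 - ((starRingEnd ℂ) h * x).re + lam * ‖x‖

/-- The complex soft-thresholding of `h`: `0` if `|h| ≤ λ`, else `(h/|h|)·(|h| − λ)/Q̂`. -/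
noncomputable def softThresh (Qh lam : ℝ) (h : ℂ) : ℂ :=
  if ‖h‖ ≤ lam then 0 else (h / (‖h‖ : ℂ)) * (((‖h‖ - lam) / Qh : ℝ) : ℂ)

section BlockSoftThresh

variable {E : Type*} [NormedAddCommGroup E] [InnerProductSpace ℝ E] {Q lam : ℝ} {h : E}

noncomputable def blockSoftThreshObj (Q lam : ℝ) (h x : E) : ℝ :=
  Q / 2 * ‖x‖ ^ 2 - ⟪h, x⟫ + lam * ‖x‖

noncomputable def blockSoftThresh (Q lam : ℝ) (h : E) : E :=
  if ‖h‖ ≤ lam then 0 else ((‖h‖ - lam) / (Q * ‖h‖)) • h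

theorem strongConvexOn_blockSoftThreshObj (hlam : 0 ≤ lam) :
    StrongConvexOn univ Q (blockSoftThreshObj Q lam h) := by
  rw [strongConvexOn_iff_convex]
  have hlin : ConvexOn ℝ univ fun x : E ↦ -⟪h, x⟫ :=
    (innerSL ℝ h).toLinearMap.concaveOn convex_univ |>.neg
  have hsplit : (fun x ↦ blockSoftThreshObj Q lam h x - Q / 2 * ‖x‖ ^ 2) =
      fun x ↦ -⟪h, x⟫ + lam • ‖x‖ := by
    ext x
    rw [blockSoftThreshObj, smul_eq_mul]
    ring
  rw [hsplit]
  exact hlin.add (convexOn_univ_norm.smul hlam)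

theorem blockSoftThreshObj_ge (x : E) :
    Q / 2 * ‖x‖ ^ 2 - (‖h‖ - lam) * ‖x‖ ≤ blockSoftThreshObj Q lam h x := by
  have := real_inner_le_norm h x
  rw [blockSoftThreshObj]
  linarith

theorem blockSoftThreshObj_smul_self {c : ℝ} (hc : 0 ≤ c) :
    blockSoftThreshObj Q lam h (c • h) =
      Q / 2 * (c * ‖h‖) ^ 2 - (‖h‖ - lam) * (c * ‖h‖) := by
  rw [blockSoftThreshObj, norm_smul, Real.norm_of_nonneg hc, real_inner_smul_right,
    real_inner_self_eq_norm_sq]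
  ring

theorem isMinOn_blockSoftThresh (hQ : 0 < Q) (hlam : 0 ≤ lam) :
    IsMinOn (blockSoftThreshObj Q lam h) univ (blockSoftThresh Q lam h) := by
  refine isMinOn_univ_iff.mpr fun x ↦ (le_trans ?_ (blockSoftThreshObj_ge x))
  have ht := norm_nonneg x
  rw [blockSoftThresh]
  split_ifs with hh
  · simp only [blockSoftThreshObj, norm_zero, inner_zero_right]
    nlinarith
  · push Not at hh
    have hpos : 0 < ‖h‖ := hlam.trans_lt hh
    set r := (‖h‖ - lam) / Q with hr_def
    have hhr : ‖h‖ - lam = Q * r := by rw [hr_def]; field_simp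
    have hc : (‖h‖ - lam) / (Q * ‖h‖) * ‖h‖ = r := by rw [hhr]; field_simp
    rw [blockSoftThreshObj_smul_self (div_nonneg (sub_nonneg.mpr hh.le) (by positivity)), hc, hhr]
    nlinarith [mul_nonneg hQ.le (sq_nonneg (‖x‖ - r))]

theorem eq_blockSoftThresh_of_isMinOn (hQ : 0 < Q) (hlam : 0 ≤ lam) {x : E}
    (hx : IsMinOn (blockSoftThreshObj Q lam h) univ x) : x = blockSoftThresh Q lam h :=
  ((strongConvexOn_blockSoftThreshObj hlam).strictConvexOn hQ).eq_of_isMinOn hx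
    (isMinOn_blockSoftThresh hQ hlam) trivial trivial

end BlockSoftThresh

theorem softThreshObj_eq_blockSoftThreshObj (Qh lam : ℝ) (h : ℂ) :
    softThreshObj Qh lam h = blockSoftThreshObj Qh lam h := by
  ext x
  rw [softThreshObj, blockSoftThreshObj, Complex.inner, mul_comm x]

theorem softThresh_eq_blockSoftThresh (Qh lam : ℝ) (h : ℂ) :
    softThresh Qh lam h = blockSoftThresh Qh lam h := by
  rw [softThresh, blockSoftThresh]
  split_ifs
  · rfl
  · rw [Complex.real_smul]
    push_cast
    ring

/-- for `Q̂ > 0`, `λ > 0` and `h ∈ ℂ`, the function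
`x ↦ (Q̂/2)|x|² − Re(h̄·x) + λ|x|` attains its global minimum at the unique point given by
the complex soft-thresholding of `h`. -/
theorem softThreshObj_unique_min (Qh lam : ℝ) (hQ : 0 < Qh) (hlam : 0 < lam) (h : ℂ) :
    (∀ x : ℂ, softThreshObj Qh lam h (softThresh Qh lam h) ≤ softThreshObj Qh lam h x) ∧
      ∀ xh : ℂ, (∀ x : ℂ, softThreshObj Qh lam h xh ≤ softThreshObj Qh lam h x) →
        xh = softThresh Qh lam h := by
  simp only [softThreshObj_eq_blockSoftThreshObj, softThresh_eq_blockSoftThresh,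
    ← isMinOn_univ_iff]
  exact ⟨isMinOn_blockSoftThresh hQ hlam.le,
    fun _ hx ↦ eq_blockSoftThresh_of_isMinOn hQ hlam.le hx⟩
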